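/- arXiv:2008.11944 — 8 statements merged into one kernel-verified Lean document; each statement's English description precedes it below -/
import Mathlib

section
/- Suppose (T_1,…,T_K) satisfies the balance equations of the block-model Dirichlet problem for label 1, and let \bar T = (s_1 + Σ_{j=1}^K (n_j − s_j)·T_j)/N be the mean temperature. Then (s_1(p−q) + Nq)·T_1 = s_1·(p−q) + N·\bar T·q, and for every k ≠ 1, (s_k(p−q) + Nq)·T_k = N·\bar T·q. -/
open Finset

/-- In the block model, if `T` satisfies the balance equations of the
Dirichlet problem for label 1 (block 1 indexed by `i1`), and
`T̄ = (s₁ + ∑ j (n j − s j)·T j)/N` is the mean temperature, then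
`(s₁(p−q) + Nq)·T₁ = s₁·(p−q) + N·T̄·q` and, for every `k ≠ 1`,
`(s_k(p−q) + Nq)·T_k = N·T̄·q`. -/
theorem dirichlet_block_model_mean_form
    (K : ℕ) (n s : Fin K → ℕ)
    (hn : ∀ k, 1 ≤ n k) (hs : ∀ k, s k ≤ n k)
    (p q : ℝ) (i1 : Fin K) (T : Fin K → ℝ)
    (N : ℕ) (hN : N = ∑ k, n k)
    (hbal : ∀ k, ((n k : ℝ) * (p - q) + (N : ℝ) * q) * T k
      = (if k = i1 then (s i1 : ℝ) * p else (s i1 : ℝ) * q)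
        + ((n k : ℝ) - (s k : ℝ)) * p * T k
        + ∑ j ∈ univ.erase k, ((n j : ℝ) - (s j : ℝ)) * q * T j)
    (Tbar : ℝ)
    (hTbar : Tbar = ((s i1 : ℝ) + ∑ j, ((n j : ℝ) - (s j : ℝ)) * T j) / (N : ℝ)) :
    ((s i1 : ℝ) * (p - q) + (N : ℝ) * q) * T i1
      = (s i1 : ℝ) * (p - q) + (N : ℝ) * Tbar * q ∧
    ∀ k, k ≠ i1 → ((s k : ℝ) * (p - q) + (N : ℝ) * q) * T k
      = (N : ℝ) * Tbar * q := by

  have hK : 0 < K := i1.pos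
  have hNpos : 0 < N := by
    rw [hN]
    exact Finset.sum_pos (fun k _ => hn k) ⟨i1, Finset.mem_univ i1⟩
  have hNne : (N : ℝ) ≠ 0 := by positivity
  set S : ℝ := ∑ j, ((n j : ℝ) - (s j : ℝ)) * T j with hS
  have hTbarN : (N : ℝ) * Tbar = (s i1 : ℝ) + S := by
    rw [hTbar]; field_simp
  have key : ∀ k, ((s k : ℝ) * (p - q) + (N : ℝ) * q) * T k
      = (if k = i1 then (s i1 : ℝ) * p else (s i1 : ℝ) * q)
        - (s i1 : ℝ) * q + (N : ℝ) * Tbar * q := by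
    intro k
    have hb := hbal k
    have herase : ∑ j ∈ univ.erase k, ((n j : ℝ) - (s j : ℝ)) * q * T j
        = (∑ j, ((n j : ℝ) - (s j : ℝ)) * q * T j)
          - ((n k : ℝ) - (s k : ℝ)) * q * T k :=
      Finset.sum_erase_eq_sub (Finset.mem_univ k)
    have hsum : ∑ j, ((n j : ℝ) - (s j : ℝ)) * q * T j = q * S := by
      rw [hS, Finset.mul_sum]; congr 1; ext j; ring
    rw [herase, hsum] at hb
    have : q * S = (N : ℝ) * Tbar * q - (s i1 : ℝ) * q := by
      rw [hTbarN]; ring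
    rw [this] at hb
    linarith [hb]
  constructor
  · have h1 := key i1
    rw [if_pos rfl] at h1
    linarith [h1]
  · intro k hk
    have h2 := key k
    rw [if_neg hk] at h2
    linarith [h2]
end

section
/- Suppose p > q > 0 and (T_1,…,T_K) satisfies the balance equations of the block-model Dirichlet problem for label 1, with mean temperature \bar T = (s_1 + Σ_{j=1}^K (n_j − s_j)·T_j)/N. Then \bar T · (1 − Σ_{k=1}^K (n_k − s_k)·q/(s_k(p−q) + Nq)) = (s_1/N) · (n_1(p−q) + Nq)/(s_1(p−q) + Nq). (All denominators s_k(p−q) + Nq are positive since p > q > 0 and N ≥ 1.) -/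
open Finset

/-!
Cancelling the own-block term `(n_k - s_k) p T_k`, the balance equation of block `k` becomes
`D_k T_k = h_k + S` with `D_k = s_k (p - q) + N q` and `S = ∑ j, (n_j - s_j) q T_j` independent
of `k`. Solving for `T_k` and summing back into `S` gives
`S (1 - ∑ k, (n_k - s_k) q / D_k) = ∑ k, (n_k - s_k) q h_k / D_k`; since `h_k = s_1 q` except
for an extra `s_1 (p - q)` at block 1, the right-hand side is `s_1 q ∑ k, (n_k - s_k) q / D_k`
plus one term, and `N T̄ = s_1 + S / q` turns this into the formula.
-/

section

variable {𝕜 ι : Type*} [Field 𝕜] [Fintype ι]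

theorem sum_mul_one_sub_sum_div_eq_of_mul_eq_add_sum {c D h T : ι → 𝕜} (hD : ∀ k, D k ≠ 0)
    (hT : ∀ k, D k * T k = h k + ∑ j, c j * T j) :
    (∑ j, c j * T j) * (1 - ∑ k, c k / D k) = ∑ k, c k * h k / D k := by
  set S := ∑ j, c j * T j
  have hcT : ∀ k, c k * T k = c k * h k / D k + S * (c k / D k) := fun k => by
    rw [eq_div_of_mul_eq (hD k) ((mul_comm _ _).trans (hT k))]
    ring
  calc S * (1 - ∑ k, c k / D k) = ∑ k, (c k * T k - S * (c k / D k)) := by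
        rw [sum_sub_distrib, ← mul_sum]; ring
    _ = ∑ k, c k * h k / D k := sum_congr rfl fun k _ => by rw [hcT]; ring

variable [DecidableEq ι]

theorem mul_eq_add_sum_of_block_balance {n s T : ι → 𝕜} {p q N b : 𝕜} {k : ι}
    (hk : (n k * (p - q) + N * q) * T k
      = b + (n k - s k) * p * T k + ∑ j ∈ univ.erase k, (n j - s j) * q * T j) :
    (s k * (p - q) + N * q) * T k = b + ∑ j, (n j - s j) * q * T j := by
  rw [sum_erase_eq_sub (mem_univ k)] at hk
  linear_combination hk

theorem block_dirichlet_mean_mul_eq {n s T : ι → 𝕜} {p q N : 𝕜} (i₁ : ι) (hq : q ≠ 0)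
    (hD : ∀ k, s k * (p - q) + N * q ≠ 0)
    (hbal : ∀ k, (n k * (p - q) + N * q) * T k
      = (if k = i₁ then s i₁ * p else s i₁ * q) + (n k - s k) * p * T k
        + ∑ j ∈ univ.erase k, (n j - s j) * q * T j) :
    (s i₁ + ∑ j, (n j - s j) * T j) / N * (1 - ∑ k, (n k - s k) * q / (s k * (p - q) + N * q))
      = s i₁ / N * ((n i₁ * (p - q) + N * q) / (s i₁ * (p - q) + N * q)) := by
  set A := ∑ k, (n k - s k) * q / (s k * (p - q) + N * q)
  set U := ∑ j, (n j - s j) * T j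
  have hfix := sum_mul_one_sub_sum_div_eq_of_mul_eq_add_sum hD fun k =>
    mul_eq_add_sum_of_block_balance (hbal k)
  have hsource : ∑ k, (n k - s k) * q * (if k = i₁ then s i₁ * p else s i₁ * q)
        / (s k * (p - q) + N * q)
      = q * (s i₁ * A + (n i₁ - s i₁) * s i₁ * (p - q) / (s i₁ * (p - q) + N * q)) := by
    have hterm : ∀ k, (n k - s k) * q * (if k = i₁ then s i₁ * p else s i₁ * q)
          / (s k * (p - q) + N * q)
        = q * s i₁ * ((n k - s k) * q / (s k * (p - q) + N * q))
          + if i₁ = k then q * ((n k - s k) * s i₁ * (p - q) / (s k * (p - q) + N * q))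
            else 0 := fun k => by
      rcases eq_or_ne k i₁ with rfl | hk
      · simp only [ite_true]; ring
      · simp only [if_neg hk, if_neg hk.symm]; ring
    rw [sum_congr rfl fun k _ => hterm k, sum_add_distrib, ← mul_sum,
      sum_ite_eq_of_mem _ _ _ (mem_univ _)]
    ring
  have hS : ∑ j, (n j - s j) * q * T j = q * U := by
    rw [mul_sum]; exact sum_congr rfl fun j _ => by ring
  rw [hsource, hS, mul_assoc] at hfix
  have hU := mul_left_cancel₀ hq hfix
  have hmean : (s i₁ + U) * (1 - A)
      = s i₁ * ((n i₁ * (p - q) + N * q) / (s i₁ * (p - q) + N * q)) := by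
    rw [add_mul, hU, show n i₁ * (p - q) + N * q
      = s i₁ * (p - q) + N * q + (n i₁ - s i₁) * (p - q) by ring, add_div, div_self (hD i₁)]
    ring
  rw [div_mul_eq_mul_div, hmean, div_mul_eq_mul_div]

end

theorem dirichlet_block_model_mean_formula_general
    (K : ℕ) (n s : Fin K → ℕ)
    (hn : ∀ k, 1 ≤ n k)
    (p q : ℝ) (hpq : p > q) (hq : q > 0)
    (i1 : Fin K) (T : Fin K → ℝ)
    (N : ℕ) (hN : N = ∑ k, n k)
    (hbal : ∀ k, ((n k : ℝ) * (p - q) + (N : ℝ) * q) * T k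
      = (if k = i1 then (s i1 : ℝ) * p else (s i1 : ℝ) * q)
        + ((n k : ℝ) - (s k : ℝ)) * p * T k
        + ∑ j ∈ univ.erase k, ((n j : ℝ) - (s j : ℝ)) * q * T j)
    (Tbar : ℝ)
    (hTbar : Tbar = ((s i1 : ℝ) + ∑ j, ((n j : ℝ) - (s j : ℝ)) * T j) / (N : ℝ)) :
    Tbar * (1 - ∑ k, ((n k : ℝ) - (s k : ℝ)) * q / ((s k : ℝ) * (p - q) + (N : ℝ) * q))
      = ((s i1 : ℝ) / (N : ℝ))
        * (((n i1 : ℝ) * (p - q) + (N : ℝ) * q)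
            / ((s i1 : ℝ) * (p - q) + (N : ℝ) * q)) := by
  have hNpos : (0 : ℝ) < N := by
    have : n i1 ≤ N := hN ▸ single_le_sum (fun k _ => Nat.zero_le (n k)) (mem_univ i1)
    exact_mod_cast (hn i1).trans this
  have hD : ∀ k, (s k : ℝ) * (p - q) + (N : ℝ) * q ≠ 0 := fun k =>
    (add_pos_of_nonneg_of_pos (mul_nonneg (Nat.cast_nonneg _) (sub_nonneg.2 hpq.le))
      (mul_pos hNpos hq)).ne'
  rw [hTbar]
  exact block_dirichlet_mean_mul_eq i1 hq.ne' hD hbal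

/-- In the block model with `p > q > 0`, if `T` satisfies the balance
equations of the Dirichlet problem for label 1 (block 1 indexed by `i1`) and
`T̄ = (s₁ + ∑ j (n j − s j)·T j)/N`, then
`T̄ · (1 − ∑ k (n_k − s_k)·q/(s_k(p−q) + Nq))
  = (s₁/N) · (n₁(p−q) + Nq)/(s₁(p−q) + Nq)`. -/
theorem dirichlet_block_model_mean_formula
    (K : ℕ) (n s : Fin K → ℕ)
    (hn : ∀ k, 1 ≤ n k) (hs : ∀ k, s k ≤ n k)
    (p q : ℝ) (hpq : p > q) (hq : q > 0)
    (i1 : Fin K) (T : Fin K → ℝ)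
    (N : ℕ) (hN : N = ∑ k, n k)
    (hbal : ∀ k, ((n k : ℝ) * (p - q) + (N : ℝ) * q) * T k
      = (if k = i1 then (s i1 : ℝ) * p else (s i1 : ℝ) * q)
        + ((n k : ℝ) - (s k : ℝ)) * p * T k
        + ∑ j ∈ univ.erase k, ((n j : ℝ) - (s j : ℝ)) * q * T j)
    (Tbar : ℝ)
    (hTbar : Tbar = ((s i1 : ℝ) + ∑ j, ((n j : ℝ) - (s j : ℝ)) * T j) / (N : ℝ)) :
    Tbar * (1 - ∑ k, ((n k : ℝ) - (s k : ℝ)) * q / ((s k : ℝ) * (p - q) + (N : ℝ) * q))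
      = ((s i1 : ℝ) / (N : ℝ))
        * (((n i1 : ℝ) * (p - q) + (N : ℝ) * q)
            / ((s i1 : ℝ) * (p - q) + (N : ℝ) * q)) :=
  dirichlet_block_model_mean_formula_general K n s hn p q hpq hq i1 T N hN hbal Tbar hTbar
end

section
/- Suppose p > q > 0, s_1 ≥ 1, Σ_{k≠1} s_k ≥ 1, and s_k ≤ n_k for every k, and suppose (T_1,…,T_K) satisfies the balance equations of the block-model Dirichlet problem for label 1. Then 0 < T_k < 1 for every k, and consequently the mean temperature \bar T = (s_1 + Σ_{j=1}^K (n_j − s_j)·T_j)/N satisfies 0 < \bar T < 1. -/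
open Finset

set_option maxHeartbeats 1000000 in
/-- In the block model with `p > q > 0`, at least one seed in block 1
(`s₁ ≥ 1`), at least one seed outside block 1 (`∑_{k ≠ 1} s k ≥ 1`) and
`s k ≤ n k` for all `k`, if `T` satisfies the balance equations of the Dirichlet
problem for label 1 (block 1 indexed by `i1`), then `0 < T k < 1` for every `k`,
and consequently the mean temperature
`T̄ = (s₁ + ∑ j (n j − s j)·T j)/N` satisfies `0 < T̄ < 1`. -/
theorem dirichlet_block_model_temperatures_in_unit_interval
    (K : ℕ) (n s : Fin K → ℕ)
    (hn : ∀ k, 1 ≤ n k) (hs : ∀ k, s k ≤ n k)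
    (p q : ℝ) (hpq : p > q) (hq : q > 0)
    (i1 : Fin K) (hs1 : 1 ≤ s i1)
    (hsother : 1 ≤ ∑ k ∈ univ.erase i1, s k)
    (T : Fin K → ℝ)
    (N : ℕ) (hN : N = ∑ k, n k)
    (hbal : ∀ k, ((n k : ℝ) * (p - q) + (N : ℝ) * q) * T k
      = (if k = i1 then (s i1 : ℝ) * p else (s i1 : ℝ) * q)
        + ((n k : ℝ) - (s k : ℝ)) * p * T k
        + ∑ j ∈ univ.erase k, ((n j : ℝ) - (s j : ℝ)) * q * T j)
    (Tbar : ℝ)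
    (hTbar : Tbar = ((s i1 : ℝ) + ∑ j, ((n j : ℝ) - (s j : ℝ)) * T j) / (N : ℝ)) :
    (∀ k, 0 < T k ∧ T k < 1) ∧ (0 < Tbar ∧ Tbar < 1) := by
  have hp : (0:ℝ) < p := hq.trans hpq
  have h1 : (1:ℝ) ≤ (s i1 : ℝ) := by exact_mod_cast hs1
  have key : ∀ k, ((s k : ℝ) * p + q * ∑ j ∈ univ.erase k, (n j : ℝ)) * T k
      = (if k = i1 then (s i1 : ℝ) * p else (s i1 : ℝ) * q)
        + ∑ j ∈ univ.erase k, ((n j : ℝ) - (s j : ℝ)) * q * T j := by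
    intro k
    have hNe : (N:ℝ) = (n k : ℝ) + ∑ j ∈ univ.erase k, (n j : ℝ) := by
      rw [hN]; push_cast
      exact (Finset.add_sum_erase univ (fun j => (n j : ℝ)) (mem_univ k)).symm
    have e := hbal k
    rw [hNe] at e
    linear_combination e
  have htot : ∀ k, (s i1 : ℝ) + 1 ≤ (s k : ℝ) + ∑ j ∈ univ.erase k, (s j : ℝ) := by
    intro k
    have e1 : (s k) + ∑ j ∈ univ.erase k, s j = ∑ j, s j :=
      Finset.add_sum_erase univ s (mem_univ k)
    have e2 : (s i1) + ∑ j ∈ univ.erase i1, s j = ∑ j, s j :=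
      Finset.add_sum_erase univ s (mem_univ i1)
    have h3 : s i1 + 1 ≤ s k + ∑ j ∈ univ.erase k, s j := by omega
    calc (s i1 : ℝ) + 1 ≤ ((s k + ∑ j ∈ univ.erase k, s j : ℕ) : ℝ) := by
          exact_mod_cast h3
      _ = (s k : ℝ) + ∑ j ∈ univ.erase k, (s j : ℝ) := by push_cast; ring
  have hSs_nonneg : ∀ k, (0:ℝ) ≤ ∑ j ∈ univ.erase k, (s j : ℝ) :=
    fun k => Finset.sum_nonneg fun j _ => by positivity
  have hns : ∀ j, (0:ℝ) ≤ (n j : ℝ) - (s j : ℝ) := by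
    intro j; have := hs j; exact sub_nonneg.2 (by exact_mod_cast this)
  have main : ∀ k, 0 < T k ∧ T k < 1 := by
    obtain ⟨kM, -, hkM⟩ := Finset.exists_max_image univ T ⟨i1, mem_univ i1⟩
    obtain ⟨km, -, hkm⟩ := Finset.exists_min_image univ T ⟨i1, mem_univ i1⟩
    have hmax : T kM < 1 := by
      by_contra hc
      push_neg at hc
      have hsum : ∑ j ∈ univ.erase kM, ((n j : ℝ) - (s j : ℝ)) * q * T j
          ≤ q * ((∑ j ∈ univ.erase kM, (n j : ℝ)) - ∑ j ∈ univ.erase kM, (s j : ℝ)) * T kM := by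
        calc ∑ j ∈ univ.erase kM, ((n j : ℝ) - (s j : ℝ)) * q * T j
            ≤ ∑ j ∈ univ.erase kM, ((n j : ℝ) - (s j : ℝ)) * q * T kM := by
              apply Finset.sum_le_sum
              intro j _
              have := hns j
              exact mul_le_mul_of_nonneg_left (hkM j (mem_univ j)) (by positivity)
          _ = q * ((∑ j ∈ univ.erase kM, (n j : ℝ)) - ∑ j ∈ univ.erase kM, (s j : ℝ)) * T kM := by
              rw [← Finset.sum_mul, ← Finset.sum_mul, Finset.sum_sub_distrib]; ring
      have e := key kM
      set Sn := ∑ j ∈ univ.erase kM, (n j : ℝ)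
      set Ss := ∑ j ∈ univ.erase kM, (s j : ℝ)
      -- (s kM * p + q * Ss) * T kM ≤ h
      have hred : ((s kM : ℝ) * p + q * Ss) * T kM
          ≤ (if kM = i1 then (s i1 : ℝ) * p else (s i1 : ℝ) * q) := by
        linarith [hsum, e]
      have hskM : (0:ℝ) ≤ (s kM : ℝ) := by positivity
      by_cases hki : kM = i1
      · rw [if_pos hki] at hred
        subst hki
        have hSs1 : (1:ℝ) ≤ Ss := by
          have h' : ((1:ℕ):ℝ) ≤ ((∑ k ∈ univ.erase kM, s k : ℕ) : ℝ) := by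
            exact_mod_cast hsother
          calc (1:ℝ) ≤ ((∑ k ∈ univ.erase kM, s k : ℕ) : ℝ) := by exact_mod_cast h'
            _ = Ss := by push_cast; rfl
        have e1 : (s kM : ℝ) * p ≤ (s kM : ℝ) * p * T kM := by
          nlinarith [mul_le_mul_of_nonneg_left hc (mul_nonneg hskM hp.le)]
        have e2 : q ≤ q * Ss * T kM := by
          have hst : (1:ℝ) ≤ Ss * T kM := by nlinarith
          nlinarith [mul_le_mul_of_nonneg_left hst hq.le]
        nlinarith [hred, e1, e2]
      · rw [if_neg hki] at hred
        have ht := htot kM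
        have hT0 : (0:ℝ) ≤ T kM := le_trans zero_le_one hc
        have a1 : ((s kM : ℝ) * q + q * Ss) * T kM ≤ ((s kM : ℝ) * p + q * Ss) * T kM := by
          apply mul_le_mul_of_nonneg_right _ hT0
          nlinarith [mul_le_mul_of_nonneg_left hpq.le hskM]
        have a2 : q * ((s i1 : ℝ) + 1) * T kM ≤ ((s kM : ℝ) * q + q * Ss) * T kM := by
          apply mul_le_mul_of_nonneg_right _ hT0
          nlinarith [mul_le_mul_of_nonneg_left ht hq.le]
        have a3 : q * ((s i1 : ℝ) + 1) ≤ q * ((s i1 : ℝ) + 1) * T kM := by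
          have hcq : (0:ℝ) ≤ q * ((s i1 : ℝ) + 1) := by positivity
          nlinarith [mul_le_mul_of_nonneg_left hc hcq]
        nlinarith [hred, a1, a2, a3]
    have hmin : 0 < T km := by
      by_contra hc
      push_neg at hc
      have hsum : q * ((∑ j ∈ univ.erase km, (n j : ℝ)) - ∑ j ∈ univ.erase km, (s j : ℝ)) * T km
          ≤ ∑ j ∈ univ.erase km, ((n j : ℝ) - (s j : ℝ)) * q * T j := by
        calc q * ((∑ j ∈ univ.erase km, (n j : ℝ)) - ∑ j ∈ univ.erase km, (s j : ℝ)) * T km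
            = ∑ j ∈ univ.erase km, ((n j : ℝ) - (s j : ℝ)) * q * T km := by
              rw [← Finset.sum_mul, ← Finset.sum_mul, Finset.sum_sub_distrib]; ring
          _ ≤ ∑ j ∈ univ.erase km, ((n j : ℝ) - (s j : ℝ)) * q * T j := by
              apply Finset.sum_le_sum
              intro j _
              have := hns j
              exact mul_le_mul_of_nonneg_left (hkm j (mem_univ j)) (by positivity)
      have e := key km
      set Sn := ∑ j ∈ univ.erase km, (n j : ℝ)
      set Ss := ∑ j ∈ univ.erase km, (s j : ℝ)
      have hred : (if km = i1 then (s i1 : ℝ) * p else (s i1 : ℝ) * q)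
          ≤ ((s km : ℝ) * p + q * Ss) * T km := by
        linarith [hsum, e]
      have hh : (s i1 : ℝ) * q ≤ (if km = i1 then (s i1 : ℝ) * p else (s i1 : ℝ) * q) := by
        split
        · nlinarith
        · exact le_rfl
      have hC : (0:ℝ) ≤ (s km : ℝ) * p + q * Ss := by
        have h' := hSs_nonneg km
        have h'' : (0:ℝ) ≤ (s km : ℝ) := by positivity
        nlinarith
      have hpos : (0:ℝ) < (s i1 : ℝ) * q := mul_pos (lt_of_lt_of_le zero_lt_one h1) hq
      linarith [hred, hh, mul_nonpos_of_nonneg_of_nonpos hC hc, hpos]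
    intro k
    exact ⟨lt_of_lt_of_le hmin (hkm k (mem_univ k)), lt_of_le_of_lt (hkM k (mem_univ k)) hmax⟩
  refine ⟨main, ?_, ?_⟩
  · have hN0 : 0 < N := by
      rw [hN]; exact Finset.sum_pos (fun k _ => hn k) ⟨i1, mem_univ i1⟩
    have hNr : (0:ℝ) < (N:ℝ) := by exact_mod_cast hN0
    rw [hTbar]
    apply div_pos _ hNr
    have : (0:ℝ) ≤ ∑ j, ((n j : ℝ) - (s j : ℝ)) * T j := by
      apply Finset.sum_nonneg
      intro j _
      exact mul_nonneg (hns j) (le_of_lt (main j).1)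
    linarith
  · have hN0 : 0 < N := by
      rw [hN]; exact Finset.sum_pos (fun k _ => hn k) ⟨i1, mem_univ i1⟩
    have hNr : (0:ℝ) < (N:ℝ) := by exact_mod_cast hN0
    rw [hTbar, div_lt_one hNr]
    have h2 : ∑ j, ((n j : ℝ) - (s j : ℝ)) * T j ≤ ∑ j, ((n j : ℝ) - (s j : ℝ)) := by
      apply Finset.sum_le_sum
      intro j _
      nlinarith [(main j).2, hns j]
    have h3 : ∑ j, ((n j : ℝ) - (s j : ℝ)) = (N:ℝ) - ∑ j, (s j : ℝ) := by
      rw [Finset.sum_sub_distrib, hN]; push_cast; ring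
    have h4 : (s i1 : ℝ) + 1 ≤ ∑ j, (s j : ℝ) := by
      have e2 : (s i1) + ∑ j ∈ univ.erase i1, s j = ∑ j, s j :=
        Finset.add_sum_erase univ s (mem_univ i1)
      have : s i1 + 1 ≤ ∑ j, s j := by omega
      calc (s i1 : ℝ) + 1 ≤ ((∑ j, s j : ℕ) : ℝ) := by exact_mod_cast this
        _ = ∑ j, (s j : ℝ) := by push_cast; rfl
    linarith
end

section
/- Suppose (T_1,…,T_K) satisfies the balance equations of the block-model Dirichlet problem for label 1, with mean temperature \bar T = (s_1 + Σ_{j=1}^K (n_j − s_j)·T_j)/N. Then the centered temperatures δ_k = T_k − \bar T satisfy (s_1(p−q) + Nq)·δ_1 = s_1·(p−q)·(1 − \bar T), and for every k ≠ 1, (s_k(p−q) + Nq)·δ_k = −s_k·(p−q)·\bar T. -/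
open Finset

/-!
Splitting off the `k`-th term of the off-diagonal sum and substituting the definition of the
mean `T̄` turns the `k`-th balance equation into
`(s_k(p−q) + Nq)·T_k = h_k − s₁q + Nq·T̄`; subtracting `(s_k(p−q) + Nq)·T̄` from both sides
gives both identities, since `h₁ − s₁q = s₁(p−q)` and `h_k − s₁q = 0` for `k ≠ 1`.
-/

theorem centered_balance_eq {ι : Type*} [Fintype ι] [DecidableEq ι]
    (n s T : ι → ℝ) (p q h S N Tbar : ℝ) (k : ι)
    (hmean : N * Tbar = S + ∑ j, (n j - s j) * T j)
    (hbal : (n k * (p - q) + N * q) * T k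
      = h + (n k - s k) * p * T k + ∑ j ∈ univ.erase k, (n j - s j) * q * T j) :
    (s k * (p - q) + N * q) * (T k - Tbar) = h - S * q - s k * (p - q) * Tbar := by
  have hrest : ∑ j ∈ univ.erase k, (n j - s j) * q * T j
      = q * (N * Tbar - S) - (n k - s k) * q * T k := by
    rw [sum_erase_eq_sub (mem_univ k), hmean, add_sub_cancel_left, mul_sum]
    simp only [mul_right_comm _ q, mul_comm q]
  rw [hrest] at hbal
  linear_combination hbal

theorem dirichlet_block_model_centered_temperatures_general
    (K : ℕ) (n s : Fin K → ℕ)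
    (hn : ∀ k, 1 ≤ n k)
    (p q : ℝ) (i1 : Fin K) (T : Fin K → ℝ)
    (N : ℕ) (hN : N = ∑ k, n k)
    (hbal : ∀ k, ((n k : ℝ) * (p - q) + (N : ℝ) * q) * T k
      = (if k = i1 then (s i1 : ℝ) * p else (s i1 : ℝ) * q)
        + ((n k : ℝ) - (s k : ℝ)) * p * T k
        + ∑ j ∈ univ.erase k, ((n j : ℝ) - (s j : ℝ)) * q * T j)
    (Tbar : ℝ)
    (hTbar : Tbar = ((s i1 : ℝ) + ∑ j, ((n j : ℝ) - (s j : ℝ)) * T j) / (N : ℝ)) :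
    ((s i1 : ℝ) * (p - q) + (N : ℝ) * q) * (T i1 - Tbar)
      = (s i1 : ℝ) * (p - q) * (1 - Tbar) ∧
    ∀ k, k ≠ i1 → ((s k : ℝ) * (p - q) + (N : ℝ) * q) * (T k - Tbar)
      = -(s k : ℝ) * (p - q) * Tbar := by
  have hN0 : (N : ℝ) ≠ 0 :=
    Nat.cast_ne_zero.2 (hN ▸ (sum_pos (fun k _ => hn k) ⟨i1, mem_univ i1⟩).ne')
  have hmean : (N : ℝ) * Tbar = s i1 + ∑ j, ((n j : ℝ) - s j) * T j := by
    rw [hTbar, mul_div_cancel₀ _ hN0]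
  have centered (k : Fin K) := centered_balance_eq (fun j => (n j : ℝ)) (fun j => (s j : ℝ)) T
    p q _ _ _ _ k hmean (hbal k)
  refine ⟨?_, fun k hk => ?_⟩
  · have h := centered i1
    rw [if_pos rfl] at h
    linear_combination h
  · have h := centered k
    rw [if_neg hk] at h
    linear_combination h

/-- In the block model, if `T` satisfies the balance equations of the
Dirichlet problem for label 1 (block 1 indexed by `i1`) with mean temperature
`T̄ = (s₁ + ∑ j (n j − s j)·T j)/N`, then the centered temperatures
`δ_k = T_k − T̄` satisfy `(s₁(p−q) + Nq)·δ₁ = s₁·(p−q)·(1 − T̄)` and, for every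
`k ≠ 1`, `(s_k(p−q) + Nq)·δ_k = −s_k·(p−q)·T̄`. -/
theorem dirichlet_block_model_centered_temperatures
    (K : ℕ) (n s : Fin K → ℕ)
    (hn : ∀ k, 1 ≤ n k) (hs : ∀ k, s k ≤ n k)
    (p q : ℝ) (i1 : Fin K) (T : Fin K → ℝ)
    (N : ℕ) (hN : N = ∑ k, n k)
    (hbal : ∀ k, ((n k : ℝ) * (p - q) + (N : ℝ) * q) * T k
      = (if k = i1 then (s i1 : ℝ) * p else (s i1 : ℝ) * q)
        + ((n k : ℝ) - (s k : ℝ)) * p * T k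
        + ∑ j ∈ univ.erase k, ((n j : ℝ) - (s j : ℝ)) * q * T j)
    (Tbar : ℝ)
    (hTbar : Tbar = ((s i1 : ℝ) + ∑ j, ((n j : ℝ) - (s j : ℝ)) * T j) / (N : ℝ)) :
    ((s i1 : ℝ) * (p - q) + (N : ℝ) * q) * (T i1 - Tbar)
      = (s i1 : ℝ) * (p - q) * (1 - Tbar) ∧
    ∀ k, k ≠ i1 → ((s k : ℝ) * (p - q) + (N : ℝ) * q) * (T k - Tbar)
      = -(s k : ℝ) * (p - q) * Tbar :=
  dirichlet_block_model_centered_temperatures_general K n s hn p q i1 T N hN hbal Tbar hTbar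
end

section
/- Suppose p > q > 0, 1 ≤ s_k ≤ n_k for every k, and (T_1,…,T_K) satisfies the balance equations of the block-model Dirichlet problem for label 1, with mean temperature \bar T = (s_1 + Σ_{j=1}^K (n_j − s_j)·T_j)/N. Then T_1 − \bar T > 0 and T_k − \bar T < 0 for every k ≠ 1. -/
open Finset

set_option maxHeartbeats 1000000

/-- In the block model with `K ≥ 2` blocks, `p > q > 0` and
`1 ≤ s k ≤ n k` for every `k`, if `T` satisfies the balance equations of the
Dirichlet problem for label 1 (block 1 indexed by `i1`) with mean temperature
`T̄ = (s₁ + ∑ j (n j − s j)·T j)/N`, then `T₁ − T̄ > 0` and `T_k − T̄ < 0` for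
every `k ≠ 1`. -/
theorem dirichlet_block_model_centered_sign
    (K : ℕ) (hK : 2 ≤ K) (n s : Fin K → ℕ)
    (hn : ∀ k, 1 ≤ n k) (hs : ∀ k, s k ≤ n k) (hs1 : ∀ k, 1 ≤ s k)
    (p q : ℝ) (hpq : p > q) (hq : q > 0)
    (i1 : Fin K) (T : Fin K → ℝ)
    (N : ℕ) (hN : N = ∑ k, n k)
    (hbal : ∀ k, ((n k : ℝ) * (p - q) + (N : ℝ) * q) * T k
      = (if k = i1 then (s i1 : ℝ) * p else (s i1 : ℝ) * q)
        + ((n k : ℝ) - (s k : ℝ)) * p * T k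
        + ∑ j ∈ univ.erase k, ((n j : ℝ) - (s j : ℝ)) * q * T j)
    (Tbar : ℝ)
    (hTbar : Tbar = ((s i1 : ℝ) + ∑ j, ((n j : ℝ) - (s j : ℝ)) * T j) / (N : ℝ)) :
    0 < T i1 - Tbar ∧ ∀ k, k ≠ i1 → T k - Tbar < 0 := by
  have hpq' : 0 < p - q := sub_pos.mpr hpq
  have hNpos : 0 < N := by
    rw [hN]
    exact Finset.sum_pos (fun k _ => hn k) ⟨i1, mem_univ i1⟩
  have hNr : (0:ℝ) < N := by exact_mod_cast hNpos
  have hsr : ∀ k, (1:ℝ) ≤ (s k : ℝ) := fun k => by exact_mod_cast hs1 k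
  have hnsr : ∀ k, (0:ℝ) ≤ (n k : ℝ) - (s k : ℝ) := fun k => by
    have := hs k; rw [sub_nonneg]; exact_mod_cast this
  set S : ℝ := ∑ j, ((n j:ℝ) - (s j:ℝ)) * T j with hS
  have hD : ∀ k, (0:ℝ) < (s k:ℝ)*(p-q) + (N:ℝ)*q := by
    intro k
    have h1 := hsr k
    nlinarith
  have key : ∀ k, ((s k:ℝ)*(p-q) + (N:ℝ)*q) * T k
      = (if k = i1 then (s i1:ℝ)*p else (s i1:ℝ)*q) + q*S := by
    intro k
    have hsum : ∑ j ∈ univ.erase k, ((n j:ℝ) - (s j:ℝ))*q*T j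
        = q*S - ((n k:ℝ) - (s k:ℝ))*q*T k := by
      rw [Finset.sum_erase_eq_sub (mem_univ k), hS, Finset.mul_sum]
      congr 1
      exact Finset.sum_congr rfl (fun j _ => by ring)
    have h := hbal k
    rw [hsum] at h
    linear_combination h
  have hNT : (N:ℝ)*Tbar = (s i1:ℝ) + S := by
    rw [hTbar]; field_simp
  have hcent1 : (T i1 - Tbar) * ((s i1:ℝ)*(p-q) + (N:ℝ)*q)
      = (s i1:ℝ)*(p-q)*(1 - Tbar) := by
    have h := key i1
    rw [if_pos rfl] at h
    linear_combination h - q * hNT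
  have hcent : ∀ k, k ≠ i1 → (T k - Tbar) * ((s k:ℝ)*(p-q) + (N:ℝ)*q)
      = -((s k:ℝ)*(p-q)*Tbar) := by
    intro k hk
    have h := key k
    rw [if_neg hk] at h
    linear_combination h - q * hNT
  -- sum of seeds bound
  have hMsum : s i1 + 1 ≤ ∑ j, s j := by
    obtain ⟨k0, hk0⟩ := Fintype.exists_ne_of_one_lt_card (by simp; omega) i1
    have h1 : s i1 + s k0 ≤ ∑ j, s j := by
      rw [← Finset.add_sum_erase univ s (mem_univ i1)]
      have : s k0 ≤ ∑ j ∈ univ.erase i1, s j :=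
        Finset.single_le_sum (fun j _ => Nat.zero_le _) (mem_erase.mpr ⟨hk0, mem_univ k0⟩)
      omega
    have := hs1 k0
    omega
  have hsumns : ∑ j, ((n j:ℝ) - (s j:ℝ)) = (N:ℝ) - ∑ j, (s j:ℝ) := by
    rw [Finset.sum_sub_distrib, hN]
    push_cast
    ring
  have hssum : (s i1:ℝ) + 1 ≤ ∑ j, (s j:ℝ) := by
    have : ((s i1 + 1 : ℕ):ℝ) ≤ ((∑ j, s j : ℕ):ℝ) := by exact_mod_cast hMsum
    push_cast at this
    simpa using this
  have hTbar_pos : 0 < Tbar := by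
    by_contra hle
    push_neg at hle
    have hge : ∀ k, Tbar ≤ T k := by
      intro k
      by_cases hk : k = i1
      · rw [hk]
        nlinarith [hcent1, hD i1,
          mul_nonneg (mul_nonneg (le_trans zero_le_one (hsr i1)) hpq'.le)
            (by linarith : (0:ℝ) ≤ 1 - Tbar)]
      · nlinarith [hcent k hk, hD k,
          mul_nonneg (mul_nonneg (le_trans zero_le_one (hsr k)) hpq'.le)
            (neg_nonneg.mpr hle)]
    have h2 : ∑ j, ((n j:ℝ) - (s j:ℝ)) * Tbar ≤ S := by
      apply Finset.sum_le_sum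
      intro j _
      exact mul_le_mul_of_nonneg_left (hge j) (hnsr j)
    rw [← Finset.sum_mul, hsumns] at h2
    have hspos : (0:ℝ) ≤ ∑ j, (s j:ℝ) := Finset.sum_nonneg (fun j _ => by positivity)
    have hint : (0:ℝ) ≤ (∑ j, (s j:ℝ)) * (-Tbar) := mul_nonneg hspos (by linarith)
    nlinarith [hsr i1, hint]
  have hTbar_lt : Tbar < 1 := by
    by_contra hge1
    push_neg at hge1
    have hle : ∀ k, T k ≤ Tbar := by
      intro k
      by_cases hk : k = i1
      · rw [hk]
        nlinarith [hcent1, hD i1,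
          mul_nonneg (mul_nonneg (le_trans zero_le_one (hsr i1)) hpq'.le)
            (by linarith : (0:ℝ) ≤ Tbar - 1)]
      · nlinarith [hcent k hk, hD k,
          mul_nonneg (mul_nonneg (le_trans zero_le_one (hsr k)) hpq'.le)
            (by linarith : (0:ℝ) ≤ Tbar)]
    have h2 : S ≤ ∑ j, ((n j:ℝ) - (s j:ℝ)) * Tbar := by
      apply Finset.sum_le_sum
      intro j _
      exact mul_le_mul_of_nonneg_left (hle j) (hnsr j)
    rw [← Finset.sum_mul, hsumns] at h2
    have hint1 : (0:ℝ) ≤ ((∑ j, (s j:ℝ)) - ((s i1:ℝ) + 1)) * Tbar :=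
      mul_nonneg (by linarith) (by linarith)
    have hint2 : (0:ℝ) ≤ (s i1:ℝ) * (Tbar - 1) :=
      mul_nonneg (by linarith [hsr i1]) (by linarith)
    linarith [hint1, hint2, mul_comm ((∑ j, (s j:ℝ))) Tbar]
  constructor
  · nlinarith [hcent1, hD i1,
      mul_pos (mul_pos (lt_of_lt_of_le one_pos (hsr i1)) hpq')
        (by linarith : (0:ℝ) < 1 - Tbar)]
  · intro k hk
    nlinarith [hcent k hk, hD k,
      mul_pos (mul_pos (lt_of_lt_of_le one_pos (hsr k)) hpq') hTbar_pos]
end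

section
/- (Consistency of the centered Dirichlet classifier on the block model.) Suppose p > q > 0 and 1 ≤ s_k ≤ n_k for every k. For each label l ∈ {1,…,K}, let (T^{(l)}_1,…,T^{(l)}_K) satisfy the balance equations for label l, let \bar T^{(l)} = (s_l + Σ_{j=1}^K (n_j − s_j)·T^{(l)}_j)/N, and let δ^{(l)}_k = T^{(l)}_k − \bar T^{(l)}. Then for every block k, δ^{(k)}_k > 0 and δ^{(l)}_k < 0 for every l ≠ k; in particular, for every block k, the label k is the unique maximizer of l ↦ δ^{(l)}_k, i.e., the centered classifier assigns label k to every non-seed node of block k. -/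
open Finset

/-- consistency of the centered Dirichlet classifier on the block
model: with `K ≥ 2` blocks, `p > q > 0` and `1 ≤ s k ≤ n k` for every `k`,
suppose for every label `l` the temperatures `T l` satisfy the balance equations
of the Dirichlet problem for label `l`, with mean `T̄ l` and centered
temperatures `δ l k = T l k − T̄ l`. Then for every block `k`, `δ k k > 0`,
`δ l k < 0` for every `l ≠ k`, and `k` is the unique maximizer of
`l ↦ δ l k`, i.e. `δ l k < δ k k` for every `l ≠ k`. -/
theorem dirichlet_classifier_consistent_block_model
    (K : ℕ) (hK : 2 ≤ K) (n s : Fin K → ℕ)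
    (hn : ∀ k, 1 ≤ n k) (hs : ∀ k, s k ≤ n k) (hs1 : ∀ k, 1 ≤ s k)
    (p q : ℝ) (hpq : p > q) (hq : q > 0)
    (T : Fin K → Fin K → ℝ)
    (N : ℕ) (hN : N = ∑ k, n k)
    (hbal : ∀ l, ∀ k, ((n k : ℝ) * (p - q) + (N : ℝ) * q) * T l k
      = (if k = l then (s l : ℝ) * p else (s l : ℝ) * q)
        + ((n k : ℝ) - (s k : ℝ)) * p * T l k
        + ∑ j ∈ univ.erase k, ((n j : ℝ) - (s j : ℝ)) * q * T l j)
    (Tbar : Fin K → ℝ)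
    (hTbar : ∀ l, Tbar l
      = ((s l : ℝ) + ∑ j, ((n j : ℝ) - (s j : ℝ)) * T l j) / (N : ℝ))
    (δ : Fin K → Fin K → ℝ)
    (hδ : ∀ l k, δ l k = T l k - Tbar l) :
    ∀ k, 0 < δ k k ∧ (∀ l, l ≠ k → δ l k < 0) ∧
      (∀ l, l ≠ k → δ l k < δ k k) := by
  have hKpos : 0 < K := by omega
  have hNn : ∀ k : Fin K, (s k : ℝ) ≤ (n k : ℝ) := fun k => Nat.cast_le.mpr (hs k)
  have hs1R : ∀ k : Fin K, (1 : ℝ) ≤ (s k : ℝ) := fun k => by exact_mod_cast hs1 k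
  have hNpos : 0 < (N : ℝ) := by
    have h0 : 0 < N := by
      rw [hN]
      exact Finset.sum_pos (fun k _ => hn k) ⟨⟨0, hKpos⟩, Finset.mem_univ _⟩
    exact_mod_cast h0
  have hnN : ∑ j, (n j : ℝ) = (N : ℝ) := by rw [hN]; push_cast; ring
  set D : Fin K → ℝ := fun k => (s k : ℝ) * (p - q) + (N : ℝ) * q with hDdef
  have hD : ∀ k, 0 < D k := by
    intro k
    simp only [hDdef]
    nlinarith [hs1R k, hNpos]
  set S : Fin K → ℝ := fun l => ∑ j, ((n j : ℝ) - (s j : ℝ)) * T l j with hSdef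
  have hkey : ∀ l k, D k * T l k
      = (if k = l then (s l : ℝ) * p else (s l : ℝ) * q) + q * S l := by
    intro l k
    have h := hbal l k
    rw [Finset.sum_erase_eq_sub (Finset.mem_univ k)] at h
    have hsum : ∑ j, ((n j : ℝ) - (s j : ℝ)) * q * T l j = q * S l := by
      simp only [hSdef, Finset.mul_sum]
      exact Finset.sum_congr rfl (fun j _ => by ring)
    rw [hsum] at h
    simp only [hDdef]
    linear_combination h
  have hT : ∀ l k, T l k
      = ((if k = l then (s l : ℝ) * p else (s l : ℝ) * q) + q * S l) / D k := by
    intro l k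
    rw [eq_div_iff (hD k).ne']
    linarith [hkey l k]
  set c : ℝ := ∑ j, q * ((n j : ℝ) - (s j : ℝ)) / D j with hcdef
  set b : Fin K → ℝ := fun l =>
    ∑ j, ((n j : ℝ) - (s j : ℝ)) * (if j = l then (s l : ℝ) * p else (s l : ℝ) * q) / D j
    with hbdef
  clear_value D S c b
  have hfix : ∀ l, S l = b l + c * S l := by
    intro l
    have hterm : ∀ j : Fin K, ((n j : ℝ) - (s j : ℝ)) * T l j
        = ((n j : ℝ) - (s j : ℝ)) * (if j = l then (s l : ℝ) * p else (s l : ℝ) * q) / D j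
          + (q * ((n j : ℝ) - (s j : ℝ)) / D j) * S l := by
      intro j
      rw [hT l j]
      ring
    calc S l = ∑ j, ((n j : ℝ) - (s j : ℝ)) * T l j := by simp only [hSdef]
      _ = ∑ j, (((n j : ℝ) - (s j : ℝ)) * (if j = l then (s l : ℝ) * p else (s l : ℝ) * q) / D j
          + (q * ((n j : ℝ) - (s j : ℝ)) / D j) * S l) :=
            Finset.sum_congr rfl (fun j _ => hterm j)
      _ = b l + c * S l := by
            rw [Finset.sum_add_distrib, ← Finset.sum_mul, hbdef, hcdef]
  have hc0 : 0 ≤ c := by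
    simp only [hcdef]
    apply Finset.sum_nonneg
    intro j _
    exact div_nonneg (mul_nonneg hq.le (by linarith [hNn j])) (hD j).le
  have hsumS1 : ∀ l : Fin K, (s l : ℝ) + 1 ≤ ∑ j, (s j : ℝ) := by
    intro l
    have hnat : s l + 1 ≤ ∑ j, s j := by
      obtain ⟨j, hj⟩ : ∃ j : Fin K, j ≠ l := by
        refine Fintype.exists_ne_of_one_lt_card ?_ l
        rw [Fintype.card_fin]; omega
      rw [← Finset.add_sum_erase _ s (Finset.mem_univ l)]
      have h1 : 1 ≤ ∑ j' ∈ univ.erase l, s j' :=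
        le_trans (hs1 j)
          (Finset.single_le_sum (fun _ _ => Nat.zero_le _)
            (Finset.mem_erase.mpr ⟨hj, Finset.mem_univ j⟩))
      omega
    calc (s l : ℝ) + 1 = ((s l + 1 : ℕ) : ℝ) := by push_cast; ring
      _ ≤ ((∑ j, s j : ℕ) : ℝ) := Nat.cast_le.mpr hnat
      _ = ∑ j, (s j : ℝ) := by push_cast; ring
  have hc1 : c < 1 := by
    have hcle : c ≤ ((N : ℝ) - ∑ j, (s j : ℝ)) / N := by
      have heq : ((N : ℝ) - ∑ j, (s j : ℝ)) / N = ∑ j, ((n j : ℝ) - (s j : ℝ)) / N := by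
        rw [← Finset.sum_div, Finset.sum_sub_distrib, hnN]
      rw [heq]
      simp only [hcdef]
      apply Finset.sum_le_sum
      intro j _
      rw [div_le_div_iff₀ (hD j) hNpos]
      simp only [hDdef]
      nlinarith [hNn j, hs1R j, hNpos, hq.le, mul_nonneg (mul_nonneg (sub_nonneg.mpr (hNn j)) (by linarith [hs1R j] : (0:ℝ) ≤ (s j : ℝ))) (by linarith : (0:ℝ) ≤ p - q)]
    have h2 : ((N : ℝ) - ∑ j, (s j : ℝ)) / N < 1 := by
      rw [div_lt_one hNpos]
      have := hsumS1 ⟨0, hKpos⟩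
      linarith [hs1R ⟨0, hKpos⟩]
    linarith
  have hb0 : ∀ l, 0 ≤ b l := by
    intro l
    simp only [hbdef]
    apply Finset.sum_nonneg
    intro j _
    apply div_nonneg _ (hD j).le
    apply mul_nonneg (by linarith [hNn j])
    by_cases hjl : j = l <;> simp [hjl] <;> nlinarith [hs1R l]
  have hS0 : ∀ l, 0 ≤ S l := by
    intro l
    nlinarith [hfix l, hb0 l, hc1]
  have hbMc : ∀ l, b l + ((N : ℝ) - (s l : ℝ)) * c ≤ (N : ℝ) - (s l : ℝ) - 1 := by
    intro l
    have h1 : b l + ((N : ℝ) - (s l : ℝ)) * c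
        = ∑ j, (((n j : ℝ) - (s j : ℝ)) * (if j = l then (s l : ℝ) * p else (s l : ℝ) * q) / D j
            + ((N : ℝ) - (s l : ℝ)) * (q * ((n j : ℝ) - (s j : ℝ)) / D j)) := by
      simp only [hbdef, hcdef]
      rw [Finset.mul_sum, Finset.sum_add_distrib]
    have h2 : ∀ j ∈ (univ : Finset (Fin K)),
        ((n j : ℝ) - (s j : ℝ)) * (if j = l then (s l : ℝ) * p else (s l : ℝ) * q) / D j
          + ((N : ℝ) - (s l : ℝ)) * (q * ((n j : ℝ) - (s j : ℝ)) / D j)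
        ≤ (n j : ℝ) - (s j : ℝ) := by
      intro j _
      have hDj := hD j
      rw [show ((n j : ℝ) - (s j : ℝ)) * (if j = l then (s l : ℝ) * p else (s l : ℝ) * q) / D j
            + ((N : ℝ) - (s l : ℝ)) * (q * ((n j : ℝ) - (s j : ℝ)) / D j)
          = (((n j : ℝ) - (s j : ℝ)) * (if j = l then (s l : ℝ) * p else (s l : ℝ) * q)
            + ((N : ℝ) - (s l : ℝ)) * (q * ((n j : ℝ) - (s j : ℝ)))) / D j from by ring,
        div_le_iff₀ hDj]
      simp only [hDdef]
      by_cases hjl : j = l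
      · subst hjl
        rw [if_pos rfl]
        have : ((n j : ℝ) - (s j : ℝ)) * ((s j : ℝ) * p)
            + ((N : ℝ) - (s j : ℝ)) * (q * ((n j : ℝ) - (s j : ℝ)))
            = ((n j : ℝ) - (s j : ℝ)) * ((s j : ℝ) * (p - q) + (N : ℝ) * q) := by ring
        linarith [this.le]
      · simp only [if_neg hjl]
        nlinarith [mul_nonneg (mul_nonneg (sub_nonneg.mpr (hNn j)) (by linarith [hs1R j] : (0:ℝ) ≤ (s j : ℝ))) (by linarith : (0:ℝ) ≤ p - q)]
    have h3 : ∑ j, ((n j : ℝ) - (s j : ℝ)) = (N : ℝ) - ∑ j, (s j : ℝ) := by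
      rw [Finset.sum_sub_distrib, hnN]
    calc b l + ((N : ℝ) - (s l : ℝ)) * c
        ≤ ∑ j, ((n j : ℝ) - (s j : ℝ)) := h1 ▸ Finset.sum_le_sum h2
      _ = (N : ℝ) - ∑ j, (s j : ℝ) := h3
      _ ≤ (N : ℝ) - (s l : ℝ) - 1 := by linarith [hsumS1 l]
  have hSlt : ∀ l, S l < (N : ℝ) - (s l : ℝ) := by
    intro l
    nlinarith [hfix l, hbMc l, hc1, hc0, hb0 l]
  have hTbarN : ∀ l, (N : ℝ) * Tbar l = (s l : ℝ) + S l := by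
    intro l
    rw [hTbar l]
    have hSl : S l = ∑ j, ((n j : ℝ) - (s j : ℝ)) * T l j := by simp only [hSdef]
    rw [hSl]
    field_simp
  have hdelta : ∀ l k, ((N : ℝ) * D k) * δ l k
      = (N : ℝ) * ((if k = l then (s l : ℝ) * p else (s l : ℝ) * q) + q * S l)
        - D k * ((s l : ℝ) + S l) := by
    intro l k
    rw [hδ l k]
    linear_combination (N : ℝ) * hkey l k - D k * hTbarN l
  intro k
  have hND : 0 < (N : ℝ) * D k := mul_pos hNpos (hD k)
  have hk1 : 0 < δ k k := by
    have h := hdelta k k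
    rw [if_pos rfl] at h
    have hA : 0 < (s k : ℝ) := by linarith [hs1R k]
    have hB : 0 < p - q := by linarith
    have hC : 0 < (N : ℝ) - (s k : ℝ) - S k := by linarith [hSlt k]
    have hpos : 0 < ((N : ℝ) * D k) * δ k k := by
      rw [h]
      simp only [hDdef]
      nlinarith [mul_pos (mul_pos hA hB) hC]
    have h0 : ((N : ℝ) * D k) * 0 < ((N : ℝ) * D k) * δ k k := by
      rw [mul_zero]; exact hpos
    exact lt_of_mul_lt_mul_left h0 hND.le
  have hk2 : ∀ l, l ≠ k → δ l k < 0 := by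
    intro l hl
    have h := hdelta l k
    rw [if_neg (Ne.symm hl)] at h
    have hA : 0 < (s l : ℝ) + S l := by linarith [hs1R l, hS0 l]
    have hB : 0 < (s k : ℝ) * (p - q) := mul_pos (by linarith [hs1R k]) (by linarith)
    have hneg : ((N : ℝ) * D k) * δ l k < 0 := by
      rw [h]
      simp only [hDdef]
      nlinarith [mul_pos hB hA]
    have h0 : ((N : ℝ) * D k) * δ l k < ((N : ℝ) * D k) * 0 := by
      rw [mul_zero]; exact hneg
    exact lt_of_mul_lt_mul_left h0 hND.le
  exact ⟨hk1, hk2, fun l hl => lt_trans (hk2 l hl) hk1⟩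
end

section
/- (Failure condition of the non-centered (vanilla) classifier on the block model.) Suppose p > q > 0 and 1 ≤ s_k ≤ n_k for every k. For each label l, let (T^{(l)}_1,…,T^{(l)}_K) satisfy the balance equations for label l. Then for every k ≠ 1, the inequality T^{(1)}_1 > T^{(k)}_1 holds if and only if s_1·q·(n_1(p−q)+Nq)/(s_1(p−q)+Nq) + s_1·(p−q)·(1 − Σ_{j=1}^K (n_j − s_j)·q/(s_j(p−q)+Nq)) > s_k·q·(n_k(p−q)+Nq)/(s_k(p−q)+Nq). In particular, non-seed nodes of block 1 may be misclassified by the vanilla classifier even though p > q. -/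
/-!
With `D_k = s_k (p - q) + N q`, the balance equation of block `k` for label `l` reads
`D_k T_k = h_k + S` with one unknown shared by all blocks, `S = ∑_j (n_j - s_j) q T_j`.
Substituting `T_j = (h_j + S) / D_j` back into `S` gives `S (1 - c) = ∑_j (n_j - s_j) q h_j / D_j`
with `c = ∑_j (n_j - s_j) q / D_j`, and `c < 1` since `D_j ≥ N q` and `∑_j (n_j - s_j) < N`.
Multiplying `D_1 T^{(l)}_1 = h^{(l)}_1 + S^{(l)}` by the positive factor `1 - c` then turns the
comparison of `T^{(1)}_1` with `T^{(k)}_1` into the closed form.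
-/

open Finset

section RankOne

variable {ι 𝕜 : Type*} [Fintype ι] [Field 𝕜]

theorem sum_mul_one_sub_sum_div_eq {a D h T : ι → 𝕜} (hD : ∀ k, D k ≠ 0)
    (hT : ∀ k, D k * T k = h k + ∑ j, a j * T j) :
    (∑ j, a j * T j) * (1 - ∑ j, a j / D j) = ∑ j, a j * h j / D j := by
  set S := ∑ j, a j * T j
  have hT' : ∀ j, T j = (h j + S) / D j := fun j => by
    rw [eq_div_iff (hD j), mul_comm]; exact hT j
  have hfix : S = ∑ j, a j * h j / D j + S * ∑ j, a j / D j := calc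
    S = ∑ j, (a j * h j / D j + S * (a j / D j)) :=
      sum_congr rfl fun j _ => by rw [hT' j]; ring
    _ = _ := by rw [sum_add_distrib, mul_sum]
  linear_combination hfix

variable [DecidableEq ι]

theorem add_sum_mul_one_sub_sum_div_eq_of_ite {a D T : ι → 𝕜} {b c : 𝕜} (l : ι)
    (hD : ∀ k, D k ≠ 0) (hT : ∀ k, D k * T k = (if k = l then c else b) + ∑ j, a j * T j) :
    (b + ∑ j, a j * T j) * (1 - ∑ j, a j / D j) = b + (c - b) * a l / D l := by
  have hsplit : ∀ j, a j * (if j = l then c else b) / D j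
      = b * (a j / D j) + if j = l then (c - b) * a l / D l else 0 := fun j => by
    split_ifs with hj
    · subst hj; ring
    · ring
  have hS := sum_mul_one_sub_sum_div_eq hD hT
  simp only [hsplit, sum_add_distrib, ← mul_sum, sum_ite_eq', mem_univ, if_true] at hS
  linear_combination hS

end RankOne

section BlockModel

variable {ι : Type*} [Fintype ι]

theorem balance_eq_iff_reduced [DecidableEq ι] {n s T : ι → ℝ} {p q N h : ℝ} (k : ι) :
    (n k * (p - q) + N * q) * T k
        = h + (n k - s k) * p * T k + ∑ j ∈ univ.erase k, (n j - s j) * q * T j ↔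
      (s k * (p - q) + N * q) * T k = h + ∑ j, (n j - s j) * q * T j := by
  rw [sum_erase_eq_sub (mem_univ k)]
  constructor <;> intro hb <;> linear_combination hb

theorem sum_sub_mul_div_lt_one {n s : ι → ℝ} {p q N : ℝ} (hpq : q ≤ p) (hq : 0 < q)
    (hN : N = ∑ k, n k) (hs0 : ∀ k, 0 ≤ s k) (hsn : ∀ k, s k ≤ n k)
    (hs : 0 < ∑ k, s k) :
    ∑ j, (n j - s j) * q / (s j * (p - q) + N * q) < 1 := by
  have hNpos : 0 < N := hN ▸ hs.trans_le (sum_le_sum fun k _ => hsn k)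
  have hterm : ∀ j, (n j - s j) * q / (s j * (p - q) + N * q) ≤ (n j - s j) / N := fun j => by
    have hsnj := sub_nonneg.mpr (hsn j)
    rw [div_le_div_iff₀ (by nlinarith [hs0 j]) hNpos]
    nlinarith [mul_nonneg (mul_nonneg hsnj (hs0 j)) (sub_nonneg.mpr hpq)]
  calc ∑ j, (n j - s j) * q / (s j * (p - q) + N * q)
      ≤ ∑ j, (n j - s j) / N := sum_le_sum fun j _ => hterm j
    _ = (N - ∑ j, s j) / N := by rw [← sum_div, sum_sub_distrib, hN]
    _ < 1 := by rw [div_lt_one hNpos]; linarith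

theorem reduced_balance_closed_form [DecidableEq ι] {n s T : ι → ℝ} {p q N : ℝ} (l : ι)
    (hD : ∀ k, s k * (p - q) + N * q ≠ 0)
    (hT : ∀ k, (s k * (p - q) + N * q) * T k
      = (if k = l then s l * p else s l * q) + ∑ j, (n j - s j) * q * T j) :
    (s l * q + ∑ j, (n j - s j) * q * T j)
        * (1 - ∑ j, (n j - s j) * q / (s j * (p - q) + N * q))
      = s l * q * ((n l * (p - q) + N * q) / (s l * (p - q) + N * q)) := by
  rw [add_sum_mul_one_sub_sum_div_eq_of_ite l hD hT, eq_comm, mul_div_assoc', div_eq_iff (hD l), add_mul, div_mul_cancel₀ _ (hD l)]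
  ring

end BlockModel

theorem vanilla_classifier_condition_block_model_general
    (K : ℕ) (n s : Fin K → ℕ)
    (hs : ∀ k, s k ≤ n k) (hs1 : ∀ k, 1 ≤ s k)
    (p q : ℝ) (hpq : p > q) (hq : q > 0)
    (i1 : Fin K) (T : Fin K → Fin K → ℝ)
    (N : ℕ) (hN : N = ∑ k, n k)
    (hbal : ∀ l, ∀ k, ((n k : ℝ) * (p - q) + (N : ℝ) * q) * T l k
      = (if k = l then (s l : ℝ) * p else (s l : ℝ) * q)
        + ((n k : ℝ) - (s k : ℝ)) * p * T l k
        + ∑ j ∈ univ.erase k, ((n j : ℝ) - (s j : ℝ)) * q * T l j) :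
    ∀ k, k ≠ i1 →
      (T i1 i1 > T k i1 ↔
        (s i1 : ℝ) * q * (((n i1 : ℝ) * (p - q) + (N : ℝ) * q)
            / ((s i1 : ℝ) * (p - q) + (N : ℝ) * q))
          + (s i1 : ℝ) * (p - q)
            * (1 - ∑ j, ((n j : ℝ) - (s j : ℝ)) * q
                / ((s j : ℝ) * (p - q) + (N : ℝ) * q))
        > (s k : ℝ) * q * (((n k : ℝ) * (p - q) + (N : ℝ) * q)
            / ((s k : ℝ) * (p - q) + (N : ℝ) * q))) := by
  intro k hk
  have hD : ∀ j, 0 < (s j : ℝ) * (p - q) + N * q := fun j =>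
    add_pos_of_pos_of_nonneg (mul_pos (by exact_mod_cast hs1 j) (sub_pos.2 hpq)) (by positivity)
  have hred := fun l j =>
    (balance_eq_iff_reduced (n := fun i => (n i : ℝ)) (s := fun i => (s i : ℝ)) j).1 (hbal l j)
  have hc : 0 < 1 - ∑ j, ((n j : ℝ) - s j) * q / (s j * (p - q) + N * q) :=
    sub_pos.2 <| sum_sub_mul_div_lt_one hpq.le hq (by rw [hN]; push_cast; rfl)
      (fun _ => Nat.cast_nonneg _) (fun j => by exact_mod_cast hs j)
      (sum_pos (fun j _ => by exact_mod_cast hs1 j) ⟨i1, mem_univ _⟩)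
  have hclosed := fun l => reduced_balance_closed_form l (fun j => (hD j).ne') (hred l)
  rw [gt_iff_lt, gt_iff_lt, ← mul_lt_mul_iff_right₀ (hD i1), hred, hred, if_pos rfl,
    if_neg hk.symm, ← mul_lt_mul_iff_left₀ hc, ← hclosed k, ← hclosed i1]
  constructor <;> intro h <;> linarith

/-- failure condition of the non-centered, vanilla classifier on the
block model: with `K ≥ 2` blocks, `p > q > 0` and `1 ≤ s k ≤ n k` for every
`k`, suppose for every label `l` the temperatures `T l` satisfy the balance
equations of the Dirichlet problem for label `l`. Then for every `k ≠ 1`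
(block 1 indexed by `i1`), the non-seed nodes of block 1 are scored higher by
label 1 than by label `k`, i.e. `T^{(1)}_1 > T^{(k)}_1`, if and only if
`s₁·q·(n₁(p−q)+Nq)/(s₁(p−q)+Nq)
  + s₁·(p−q)·(1 − ∑_j (n_j − s_j)·q/(s_j(p−q)+Nq))
  > s_k·q·(n_k(p−q)+Nq)/(s_k(p−q)+Nq)`. -/
theorem vanilla_classifier_condition_block_model
    (K : ℕ) (hK : 2 ≤ K) (n s : Fin K → ℕ)
    (hn : ∀ k, 1 ≤ n k) (hs : ∀ k, s k ≤ n k) (hs1 : ∀ k, 1 ≤ s k)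
    (p q : ℝ) (hpq : p > q) (hq : q > 0)
    (i1 : Fin K) (T : Fin K → Fin K → ℝ)
    (N : ℕ) (hN : N = ∑ k, n k)
    (hbal : ∀ l, ∀ k, ((n k : ℝ) * (p - q) + (N : ℝ) * q) * T l k
      = (if k = l then (s l : ℝ) * p else (s l : ℝ) * q)
        + ((n k : ℝ) - (s k : ℝ)) * p * T l k
        + ∑ j ∈ univ.erase k, ((n j : ℝ) - (s j : ℝ)) * q * T l j) :
    ∀ k, k ≠ i1 →
      (T i1 i1 > T k i1 ↔
        (s i1 : ℝ) * q * (((n i1 : ℝ) * (p - q) + (N : ℝ) * q)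
            / ((s i1 : ℝ) * (p - q) + (N : ℝ) * q))
          + (s i1 : ℝ) * (p - q)
            * (1 - ∑ j, ((n j : ℝ) - (s j : ℝ)) * q
                / ((s j : ℝ) * (p - q) + (N : ℝ) * q))
        > (s k : ℝ) * q * (((n k : ℝ) * (p - q) + (N : ℝ) * q)
            / ((s k : ℝ) * (p - q) + (N : ℝ) * q))) :=
  vanilla_classifier_condition_block_model_general K n s hs hs1 p q hpq hq i1 T N hN hbal
end

section
/- If p > q > 0, s_k ≤ n_k for every k, and Σ_{k=1}^K s_k ≥ 1, then there exists exactly one vector (T_1,…,T_K) ∈ ℝ^K satisfying the balance equations of the block-model Dirichlet problem for label 1. -/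
open Finset

/-!
Moving `(n_k - s_k) q T_k` to the right-hand side turns the balance equations into
`d_k T_k = h_k + ∑_j w_j T_j` with `d_k = s_k (p - q) + N q` and `w_j = (n_j - s_j) q`,
a diagonal system perturbed by a rank-one matrix. Any solution is determined by the scalar
`x = ∑_j w_j T_j`, which must satisfy `x = ∑_j w_j h_j / d_j + x ∑_j w_j / d_j`; this has
exactly one root as soon as `∑_j w_j / d_j ≠ 1`. In the block model `d_j ≥ N q`, so
`∑_j w_j / d_j ≤ ∑_j (n_j - s_j) / N = 1 - (∑_j s_j) / N < 1` once there is a seed.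
-/

section RankOnePerturbation

variable {ι 𝕜 : Type*} [Fintype ι] [Field 𝕜]

theorem sum_mul_add_div (w h d : ι → 𝕜) (x : 𝕜) :
    ∑ j, w j * ((h j + x) / d j) = ∑ j, w j * h j / d j + x * ∑ j, w j / d j := by
  rw [mul_sum, ← sum_add_distrib]
  exact sum_congr rfl fun j _ => by ring

theorem existsUnique_mul_eq_add_sum (d h w : ι → 𝕜) (hd : ∀ k, d k ≠ 0)
    (hw : ∑ j, w j / d j ≠ 1) :
    ∃! T : ι → 𝕜, ∀ k, d k * T k = h k + ∑ j, w j * T j := by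
  set m := ∑ j, w j / d j
  set c := ∑ j, w j * h j / d j
  have hm : 1 - m ≠ 0 := sub_ne_zero.mpr hw.symm
  have hfix : c + c / (1 - m) * m = c / (1 - m) := by field_simp; ring
  refine ⟨fun k => (h k + c / (1 - m)) / d k, fun k => ?_, fun T hT => ?_⟩
  · rw [sum_mul_add_div, hfix, mul_div_cancel₀ _ (hd k)]
  · set x := ∑ j, w j * T j
    have hT_eq : ∀ k, T k = (h k + x) / d k := fun k => by
      rw [eq_div_iff (hd k), mul_comm]
      exact hT k
    have hx_fix : x = c + x * m := by
      calc x = ∑ j, w j * ((h j + x) / d j) := sum_congr rfl fun j _ => by rw [← hT_eq j]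
        _ = c + x * m := sum_mul_add_div w h d x
    have hx : x = c / (1 - m) := eq_div_of_mul_eq hm (by linear_combination hx_fix)
    funext k
    rw [hT_eq k, hx]

end RankOnePerturbation

section BlockModel

variable {ι : Type*} [Fintype ι]

theorem block_balance_iff [DecidableEq ι] (n s T : ι → ℝ) (N p q h : ℝ) (k : ι) :
    (n k * (p - q) + N * q) * T k
        = h + (n k - s k) * p * T k + ∑ j ∈ univ.erase k, (n j - s j) * q * T j ↔
      (s k * (p - q) + N * q) * T k = h + ∑ j, (n j - s j) * q * T j := by
  rw [← add_sum_erase _ _ (mem_univ k)]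
  constructor <;> intro h <;> linear_combination h

theorem sum_div_block_pivot_lt_one (n s : ι → ℝ) (hs₀ : ∀ k, 0 ≤ s k)
    (hs : ∀ k, s k ≤ n k) (hseed : 0 < ∑ k, s k) {p q : ℝ} (hpq : q ≤ p) (hq : 0 < q) :
    ∑ j, (n j - s j) * q / (s j * (p - q) + (∑ k, n k) * q) < 1 := by
  set N := ∑ k, n k
  have hN : 0 < N := hseed.trans_le (sum_le_sum fun k _ => hs k)
  have hterm : ∀ j, (n j - s j) * q / (s j * (p - q) + N * q) ≤ (n j - s j) / N := by
    intro j
    calc (n j - s j) * q / (s j * (p - q) + N * q)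
        ≤ (n j - s j) * q / (N * q) :=
          div_le_div_of_nonneg_left (mul_nonneg (sub_nonneg.mpr (hs j)) hq.le)
            (by positivity) (le_add_of_nonneg_left (mul_nonneg (hs₀ j) (sub_nonneg.mpr hpq)))
      _ = (n j - s j) / N := mul_div_mul_right _ _ hq.ne'
  calc _ ≤ ∑ j, (n j - s j) / N := sum_le_sum fun j _ => hterm j
    _ = 1 - (∑ k, s k) / N := by rw [← sum_div, sum_sub_distrib, sub_div, div_self hN.ne']
    _ < 1 := sub_lt_self 1 (div_pos hseed hN)

end BlockModel

theorem dirichlet_block_model_existence_uniqueness_general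
    (K : ℕ) (n s : Fin K → ℕ)
    (hs : ∀ k, s k ≤ n k)
    (hseed : 1 ≤ ∑ k, s k)
    (p q : ℝ) (hpq : p > q) (hq : q > 0)
    (i1 : Fin K)
    (N : ℕ) (hN : N = ∑ k, n k) :
    ∃! T : Fin K → ℝ,
      ∀ k, ((n k : ℝ) * (p - q) + (N : ℝ) * q) * T k
        = (if k = i1 then (s i1 : ℝ) * p else (s i1 : ℝ) * q)
          + ((n k : ℝ) - (s k : ℝ)) * p * T k
          + ∑ j ∈ univ.erase k, ((n j : ℝ) - (s j : ℝ)) * q * T j := by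
  have hNR : (N : ℝ) = ∑ k, (n k : ℝ) := by rw [hN, Nat.cast_sum]
  have hseedR : (0 : ℝ) < ∑ k, (s k : ℝ) := by exact_mod_cast hseed
  have hpivot : ∀ k, (s k : ℝ) * (p - q) + N * q ≠ 0 := fun k => by
    have : (0 : ℝ) < N := hNR ▸ hseedR.trans_le (sum_le_sum fun k _ => by exact_mod_cast hs k)
    positivity
  have hsum : ∑ j, ((n j : ℝ) - s j) * q / ((s j : ℝ) * (p - q) + N * q) ≠ 1 := by
    rw [hNR]
    exact (sum_div_block_pivot_lt_one _ _ (fun k => (s k).cast_nonneg)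
      (fun k => by exact_mod_cast hs k) hseedR hpq.le hq).ne
  refine (existsUnique_congr fun T => forall_congr' fun k =>
    block_balance_iff (fun k => (n k : ℝ)) (fun k => (s k : ℝ)) T N p q _ k).mpr ?_
  exact existsUnique_mul_eq_add_sum _ _ _ hpivot hsum

/-- In the block model with `p > q > 0`, `s k ≤ n k` for every `k`,
`n k ≥ 1` for every `k`, and at least one seed (`∑ k, s k ≥ 1`), there exists
exactly one vector `(T₁, …, T_K)` satisfying the balance equations of the
Dirichlet problem for label 1 (block 1 indexed by `i1`). -/
theorem dirichlet_block_model_existence_uniqueness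
    (K : ℕ) (n s : Fin K → ℕ)
    (hn : ∀ k, 1 ≤ n k) (hs : ∀ k, s k ≤ n k)
    (hseed : 1 ≤ ∑ k, s k)
    (p q : ℝ) (hpq : p > q) (hq : q > 0)
    (i1 : Fin K)
    (N : ℕ) (hN : N = ∑ k, n k) :
    ∃! T : Fin K → ℝ,
      ∀ k, ((n k : ℝ) * (p - q) + (N : ℝ) * q) * T k
        = (if k = i1 then (s i1 : ℝ) * p else (s i1 : ℝ) * q)
          + ((n k : ℝ) - (s k : ℝ)) * p * T k
          + ∑ j ∈ univ.erase k, ((n j : ℝ) - (s j : ℝ)) * q * T j :=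
  dirichlet_block_model_existence_uniqueness_general K n s hs hseed p q hpq hq i1 N hN
end
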